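/- Let (ε_i)_{i=1}^{m(n)} be i.i.d. N(0, σ_n²) random variables where m(n) = n(n-1)/2, σ_n² = c²/log(n), and c > w*/4 for a fixed w* > 0. Then the probability that |ε_i| < w*/2 simultaneously for all i = 1, …, m(n) converges to 0 as n → ∞. -/

import Mathlib

open MeasureTheory ProbabilityTheory Filter
open scoped NNReal


/-- Lower bound for the gaussian measure of the interval `[A, A + √v]`. -/
lemma gauss_icc_lb {v : ℝ≥0} (hv : v ≠ 0) {A : ℝ} (hA : 0 ≤ A) :
    Real.exp (-(A + Real.sqrt v) ^ 2 / (2 * v)) / Real.sqrt (2 * Real.pi)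
      ≤ ((gaussianReal 0 v) (Set.Icc A (A + Real.sqrt v))).toReal := by
  have hv' : (0 : ℝ) < v := by
    have := v.coe_nonneg
    rcases this.lt_or_eq with h | h
    · exact h
    · exact absurd (by exact_mod_cast h.symm) hv
  have hs : 0 < Real.sqrt v := Real.sqrt_pos.mpr hv'
  set b : ℝ := A + Real.sqrt v with hb
  have hAb : A ≤ b := by rw [hb]; linarith
  rw [gaussianReal_apply_eq_integral _ hv, ENNReal.toReal_ofReal
    (setIntegral_nonneg measurableSet_Icc fun x _ => gaussianPDFReal_nonneg _ _ _)]
  have key : ∫ x in Set.Icc A b, gaussianPDFReal 0 v b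
      ≤ ∫ x in Set.Icc A b, gaussianPDFReal 0 v x := by
    refine setIntegral_mono_on ?_ ((integrable_gaussianPDFReal 0 v).integrableOn)
      measurableSet_Icc ?_
    · exact integrableOn_const (by rw [Real.volume_Icc]; exact ENNReal.ofReal_ne_top) enorm_ne_top
    · intro x hx
      rcases hx with ⟨hx1, hx2⟩
      unfold gaussianPDFReal
      have h2v : (0 : ℝ) < 2 * v := by linarith
      have hx0 : 0 ≤ x := le_trans hA hx1
      have hsq : x ^ 2 ≤ b ^ 2 := pow_le_pow_left₀ hx0 hx2 2
      have hexp : Real.exp (-(b - 0) ^ 2 / (2 * v)) ≤ Real.exp (-(x - 0) ^ 2 / (2 * v)) := by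
        apply Real.exp_le_exp.mpr
        rw [sub_zero, sub_zero, neg_div, neg_div, neg_le_neg_iff]
        exact by gcongr
      exact mul_le_mul_of_nonneg_left hexp (by positivity)
  refine le_trans (le_of_eq ?_) key
  rw [setIntegral_const, measureReal_def, Real.volume_Icc, smul_eq_mul, ENNReal.toReal_ofReal (by linarith)]
  have hab : b - A = Real.sqrt v := by rw [hb]; ring
  rw [hab]
  unfold gaussianPDFReal
  have h2pi : (0:ℝ) < 2 * Real.pi := by positivity
  rw [sub_zero, Real.sqrt_mul (le_of_lt h2pi)]
  field_simp

lemma exponent_bound {a t L b' lg : ℝ} (hk : 0 < t - a) (hL0 : 0 ≤ L)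
    (hL : b' ^ 2 + (t - a) + 2 * (t - a) * lg ≤ (t - a) ^ 2 * L) :
    a * L + b' * Real.sqrt L + 1 / 2 + lg ≤ t * L := by
  have hu : Real.sqrt L ^ 2 = L := Real.sq_sqrt hL0
  nlinarith [sq_nonneg ((t - a) * Real.sqrt L - b'), hk, hu]


/-- Proposition 1 (first half): with m(n) = n(n-1)/2 i.i.d. N(0, c²/log n) errors
    and c > w*/4, the probability that all |ε_i| < w*/2 tends to 0. -/
theorem atteson_bound_fails (w c : ℝ) (hw : 0 < w) (hc : w / 4 < c) :
    Tendsto (fun n : ℕ =>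
      ((Measure.pi (fun _ : Fin (n * (n - 1) / 2) =>
          gaussianReal 0 ((c ^ 2 / Real.log n).toNNReal)))
        {f | ∀ i, |f i| < w / 2}).toReal)
      atTop (nhds 0) := by
  have hc0 : 0 < c := lt_trans (by positivity) hc
  set a : ℝ := w ^ 2 / (8 * c ^ 2) with ha
  have ha0 : 0 < a := by positivity
  have ha2 : a < 2 := by
    rw [ha, div_lt_iff₀ (by positivity)]
    nlinarith
  set t : ℝ := (a + 2) / 2 with ht
  have hk : 0 < t - a := by rw [ht]; linarith
  have ht2 : t < 2 := by rw [ht]; linarith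
  set b' : ℝ := w / (2 * c) with hb'
  set lg : ℝ := Real.log (Real.sqrt (2 * Real.pi)) with hlg
  set R : ℝ := (b' ^ 2 + (t - a) + 2 * (t - a) * lg) / (t - a) ^ 2 with hR
  have hg : Tendsto (fun n : ℕ => Real.exp (-((n : ℝ) ^ ((2 : ℝ) - t) / 4)))
      atTop (nhds 0) := by
    refine Real.tendsto_exp_atBot.comp (tendsto_neg_atTop_atBot.comp ?_)
    exact ((tendsto_rpow_atTop (by linarith)).comp tendsto_natCast_atTop_atTop).atTop_div_const
      (by norm_num)
  have hmain : ∀ᶠ n : ℕ in atTop,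
      ((Measure.pi (fun _ : Fin (n * (n - 1) / 2) =>
          gaussianReal 0 ((c ^ 2 / Real.log n).toNNReal)))
        {f | ∀ i, |f i| < w / 2}).toReal ≤ Real.exp (-((n : ℝ) ^ ((2 : ℝ) - t) / 4)) := by
    have hlog : ∀ᶠ n : ℕ in atTop, max 1 R ≤ Real.log n :=
      (Real.tendsto_log_atTop.comp tendsto_natCast_atTop_atTop).eventually_ge_atTop _
    filter_upwards [hlog, eventually_ge_atTop 2] with n hLn hn2
    set L : ℝ := Real.log (n : ℝ) with hLdef
    have hL1 : (1 : ℝ) ≤ L := le_trans (le_max_left _ _) hLn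
    have hLR : R ≤ L := le_trans (le_max_right _ _) hLn
    have hL0 : (0 : ℝ) < L := by linarith
    set v : ℝ≥0 := (c ^ 2 / L).toNNReal with hvdef
    have hvco : (v : ℝ) = c ^ 2 / L := by
      rw [hvdef, Real.coe_toNNReal _ (div_nonneg (by positivity) hL0.le)]
    have hvne : v ≠ 0 := (Real.toNNReal_pos.mpr (div_pos (by positivity) hL0)).ne'
    set μn := gaussianReal 0 v with hμn
    set s : ℝ := Real.sqrt v with hsdef
    have hs0 : 0 < s := Real.sqrt_pos.mpr (by rw [hvco]; exact div_pos (by positivity) hL0)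
    set S : Set ℝ := {x | |x| < w / 2} with hS
    set T : Set ℝ := Set.Icc (w / 2) (w / 2 + s) with hT
    have hdisj : Disjoint S T := by
      rw [Set.disjoint_left]
      intro x hxS hxT
      have h1 : w / 2 ≤ x := hxT.1
      have h2 : |x| < w / 2 := hxS
      have := le_abs_self x
      linarith
    have hPQ : (μn S).toReal + (μn T).toReal ≤ 1 := by
      rw [← ENNReal.toReal_add (measure_ne_top _ _) (measure_ne_top _ _),
        ← measure_union hdisj measurableSet_Icc]
      calc (μn (S ∪ T)).toReal ≤ (μn Set.univ).toReal :=
            ENNReal.toReal_mono (measure_ne_top _ _) (measure_mono (Set.subset_univ _))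
        _ = 1 := by simp [hμn]
    have hq1 : Real.exp (-(w / 2 + s) ^ 2 / (2 * v)) / Real.sqrt (2 * Real.pi)
        ≤ (μn T).toReal := gauss_icc_lb hvne (by positivity)
    have hsqL : Real.sqrt L ^ 2 = L := Real.sq_sqrt hL0.le
    have hsl0 : 0 < Real.sqrt L := Real.sqrt_pos.mpr hL0
    have hsL : s = c / Real.sqrt L := by
      rw [hsdef, hvco, Real.sqrt_div' _ hL0.le, Real.sqrt_sq hc0.le]
    have hexp_eq : (w / 2 + s) ^ 2 / (2 * (v : ℝ)) = a * L + b' * Real.sqrt L + 1 / 2 := by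
      rw [hvco, hsL, ha, hb']
      field_simp
      linear_combination (-(32 : ℝ) * c * (w * Real.sqrt L + c)) * hsqL
    have hEB : a * L + b' * Real.sqrt L + 1 / 2 + lg ≤ t * L := by
      refine exponent_bound hk hL0.le ?_
      have h2 : b' ^ 2 + (t - a) + 2 * (t - a) * lg ≤ L * (t - a) ^ 2 :=
        (div_le_iff₀ (by positivity)).mp hLR
      linarith [h2]
    have hq2 : Real.exp (-(t * L)) ≤ (μn T).toReal := by
      refine le_trans ?_ hq1
      have h2pi : (0 : ℝ) < Real.sqrt (2 * Real.pi) := by positivity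
      have heq : Real.exp (-(w / 2 + s) ^ 2 / (2 * v)) / Real.sqrt (2 * Real.pi)
          = Real.exp (-(w / 2 + s) ^ 2 / (2 * v) - lg) := by
        rw [Real.exp_sub, hlg, Real.exp_log h2pi]
      rw [heq]
      apply Real.exp_le_exp.mpr
      rw [neg_div, hexp_eq]
      linarith
    set q : ℝ := (μn T).toReal with hq
    have hq0 : 0 ≤ q := ENNReal.toReal_nonneg
    have hp_le : (μn S).toReal ≤ Real.exp (-q) := by
      have := Real.add_one_le_exp (-q)
      linarith
    have hSet : {f : Fin (n * (n - 1) / 2) → ℝ | ∀ i, |f i| < w / 2}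
        = Set.pi Set.univ (fun _ => S) := by
      ext f
      simp only [Set.mem_setOf_eq, Set.mem_univ_pi, hS]
    rw [hSet, Measure.pi_pi, Finset.prod_const, Finset.card_univ, Fintype.card_fin,
      ENNReal.toReal_pow]
    set m : ℕ := n * (n - 1) / 2 with hm
    have hdvd : 2 ∣ n * (n - 1) := (Nat.even_mul_pred_self n).two_dvd
    have hmcast : ((m : ℕ) : ℝ) = (n : ℝ) * ((n : ℝ) - 1) / 2 := by
      rw [hm, Nat.cast_div hdvd (by norm_num), Nat.cast_mul,
        Nat.cast_sub (show 1 ≤ n by omega), Nat.cast_one, Nat.cast_ofNat]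
    have hn2' : (2 : ℝ) ≤ (n : ℝ) := by exact_mod_cast hn2
    have hmge : (n : ℝ) ^ 2 / 4 ≤ (m : ℝ) := by
      rw [hmcast]; nlinarith
    calc (μn S).toReal ^ m ≤ Real.exp (-q) ^ m :=
          pow_le_pow_left₀ ENNReal.toReal_nonneg hp_le m
      _ = Real.exp (-((m : ℝ) * q)) := by rw [← Real.exp_nat_mul]; ring_nf
      _ ≤ Real.exp (-((n : ℝ) ^ ((2 : ℝ) - t) / 4)) := by
          apply Real.exp_le_exp.mpr
          rw [neg_le_neg_iff]
          have hrw : (n : ℝ) ^ ((2 : ℝ) - t) = (n : ℝ) ^ 2 * Real.exp (-(t * L)) := by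
            rw [Real.rpow_def_of_pos (show (0 : ℝ) < (n : ℝ) by positivity),
              show Real.log (n : ℝ) * ((2 : ℝ) - t)
                = ((2 : ℕ) : ℝ) * Real.log (n : ℝ) + -(t * Real.log (n : ℝ)) by push_cast; ring,
              Real.exp_add, Real.exp_nat_mul, Real.exp_log (show (0 : ℝ) < (n : ℝ) by positivity)]
          calc (n : ℝ) ^ ((2 : ℝ) - t) / 4 = ((n : ℝ) ^ 2 / 4) * Real.exp (-(t * L)) := by
                rw [hrw]; ring
            _ ≤ (m : ℝ) * q := mul_le_mul hmge hq2 (Real.exp_nonneg _) (Nat.cast_nonneg m)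
  exact tendsto_of_tendsto_of_tendsto_of_le_of_le' tendsto_const_nhds hg
    (Eventually.of_forall fun n => ENNReal.toReal_nonneg) hmain
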